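/- Along any solution of the Lorentz-Dirac comparison dynamics m(v)v̇ = e(E_ex(q) + v × B_ex(q)) + ε(e²/6π)[γ⁴(v·v̈)v + 3γ⁶(v·v̇)²v + 3γ⁴(v·v̇)v̇ + γ²v̈] with q̇ = v, the modified energy G_ε(q,v,v̇) = E_s(v) + eφ_ex(q) - ε(e²/6π)γ⁴(v·v̇) satisfies dG_ε/dt = -ε(e²/6π)[γ⁴ v̇² + γ⁶ (v·v̇)²]; in particular G_ε is nonincreasing along solutions. -/

import Mathlib

open Real
open scoped RealInnerProductSpace

noncomputable def cross3 (a b : EuclideanSpace ℝ (Fin 3)) : EuclideanSpace ℝ (Fin 3) :=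
  (WithLp.equiv 2 (Fin 3 → ℝ)).symm
    ![a 1 * b 2 - a 2 * b 1, a 2 * b 0 - a 0 * b 2, a 0 * b 1 - a 1 * b 0]

/-!
With `γ² (1 - |v|²) = 1` one finds `d(γ⁴)/dt = 4γ⁶ (v·v̇)`, so the power of the radiation
reaction term splits as `v · F_rad = d/dt [γ⁴ (v·v̇)] - (γ⁴ v̇² + γ⁶ (v·v̇)²)`: a total
derivative (the Schott energy) minus the nonnegative Larmor power. The Lorentz force
contributes `-d/dt φ_ex(q)`, its magnetic part doing no work, and `v · m(v) v̇ = d/dt E_s(v)`.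
-/

theorem inner_cross3_self (v B : EuclideanSpace ℝ (Fin 3)) : ⟪v, cross3 v B⟫ = 0 := by
  simp only [cross3, PiLp.inner_apply, Fin.sum_univ_three, WithLp.equiv_symm_apply,
    Matrix.cons_val, RCLike.inner_apply, conj_trivial]
  ring

section LorentzFactor

variable {F : Type*} [NormedAddCommGroup F]

noncomputable def lorentzFactor (v : F) : ℝ := (√(1 - ‖v‖ ^ 2))⁻¹

theorem lorentzFactor_sq_mul_one_sub_norm_sq {v : F} (hv : ‖v‖ < 1) :
    lorentzFactor v ^ 2 * (1 - ‖v‖ ^ 2) = 1 := by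
  have hpos : 0 < 1 - ‖v‖ ^ 2 := by nlinarith [norm_nonneg v]
  rw [lorentzFactor, inv_pow, sq_sqrt hpos.le, inv_mul_cancel₀ hpos.ne']

variable [InnerProductSpace ℝ F]

theorem HasGradientAt.comp_hasDerivAt [CompleteSpace F] {f : F → ℝ} {f' : F} {g : ℝ → F}
    {g' : F} {t : ℝ} (hf : HasGradientAt f f' (g t)) (hg : HasDerivAt g g' t) :
    HasDerivAt (fun s => f (g s)) ⟪f', g'⟫ t := by
  have h := hf.hasFDerivAt.comp_hasDerivAt t hg
  simp only [InnerProductSpace.toDual_apply_apply] at h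
  exact h

theorem HasDerivAt.lorentzFactor {v : ℝ → F} {a : F} {t : ℝ} (hv : HasDerivAt v a t)
    (hv1 : ‖v t‖ < 1) :
    HasDerivAt (fun s => lorentzFactor (v s)) (lorentzFactor (v t) ^ 3 * ⟪v t, a⟫) t := by
  have hpos : 0 < 1 - ‖v t‖ ^ 2 := by nlinarith [norm_nonneg (v t)]
  have hnorm := hv.norm_sq.const_sub 1
  have hsqrt : HasDerivAt (fun s => (√(1 - ‖v s‖ ^ 2))⁻¹)
      (-(-(2 * ⟪v t, a⟫) / (2 * √(1 - ‖v t‖ ^ 2))) / √(1 - ‖v t‖ ^ 2) ^ 2) t :=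
    (hnorm.sqrt hpos.ne').inv (sqrt_pos.2 hpos).ne'
  refine hsqrt.congr_deriv ?_
  have hs : √(1 - ‖v t‖ ^ 2) ≠ 0 := (sqrt_pos.2 hpos).ne'
  simp only [_root_.lorentzFactor]
  field_simp

theorem hasDerivAt_schottEnergy {v a : ℝ → F} {b : F} {t : ℝ} (hv : HasDerivAt v (a t) t)
    (ha : HasDerivAt a b t) (hv1 : ‖v t‖ < 1) :
    HasDerivAt (fun s => lorentzFactor (v s) ^ 4 * ⟪v s, a s⟫)
      (4 * lorentzFactor (v t) ^ 6 * ⟪v t, a t⟫ ^ 2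
        + lorentzFactor (v t) ^ 4 * (⟪v t, b⟫ + ‖a t‖ ^ 2)) t := by
  refine (((hv.lorentzFactor hv1).fun_pow 4).mul (hv.inner ℝ ha)).congr_deriv ?_
  rw [real_inner_self_eq_norm_sq]
  push_cast
  ring

def radiationReaction (γ : ℝ) (v a b : F) : F :=
  (γ ^ 4 * ⟪v, b⟫) • v + (3 * γ ^ 6 * ⟪v, a⟫ ^ 2) • v + (3 * γ ^ 4 * ⟪v, a⟫) • a + γ ^ 2 • b

theorem inner_radiationReaction {γ : ℝ} {v a b : F} (hγ : γ ^ 2 * (1 - ‖v‖ ^ 2) = 1) :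
    ⟪v, radiationReaction γ v a b⟫
      = (4 * γ ^ 6 * ⟪v, a⟫ ^ 2 + γ ^ 4 * (⟪v, b⟫ + ‖a‖ ^ 2))
        - (γ ^ 4 * ‖a‖ ^ 2 + γ ^ 6 * ⟪v, a⟫ ^ 2) := by
  simp only [radiationReaction, inner_add_right, inner_smul_right, real_inner_self_eq_norm_sq]
  linear_combination -(γ ^ 2 * ⟪v, b⟫ + 3 * γ ^ 4 * ⟪v, a⟫ ^ 2) * hγ

end LorentzFactor

/-- Energy balance for the Lorentz–Dirac comparison dynamics: along any solution,
the modified energy `G_ε = E_s(v) + eφ_ex(q) - ε(e²/6π)γ⁴(v·v̇)` (which includes the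
Schott term) satisfies `dG_ε/dt = -ε(e²/6π)[γ⁴ v̇² + γ⁶ (v·v̇)²]`; in particular
`G_ε` is nonincreasing along solutions. -/
theorem schott_energy_balance
    (e ε : ℝ) (hε : 0 ≤ ε)
    (φex : EuclideanSpace ℝ (Fin 3) → ℝ)
    (Eex Bex : EuclideanSpace ℝ (Fin 3) → EuclideanSpace ℝ (Fin 3))
    (hEex : ∀ x, HasGradientAt φex (-(Eex x)) x)
    (Es : EuclideanSpace ℝ (Fin 3) → ℝ)
    (M : EuclideanSpace ℝ (Fin 3) →
      (EuclideanSpace ℝ (Fin 3) →ₗ[ℝ] EuclideanSpace ℝ (Fin 3)))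
    (q v a b : ℝ → EuclideanSpace ℝ (Fin 3))
    (hq : ∀ t, HasDerivAt q (v t) t)
    (hv : ∀ t, HasDerivAt v (a t) t)
    (ha : ∀ t, HasDerivAt a (b t) t)
    (hv1 : ∀ t, ‖v t‖ < 1)
    (γ : ℝ → ℝ) (hγ : ∀ t, γ t = (Real.sqrt (1 - ‖v t‖^2))⁻¹)
    (hM : ∀ t, HasDerivAt (fun s => Es (v s)) ⟪v t, M (v t) (a t)⟫ t)
    (hODE : ∀ t, M (v t) (a t)
      = e • (Eex (q t) + cross3 (v t) (Bex (q t)))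
        + (ε * (e^2 / (6 * π))) •
          ((γ t ^ 4 * ⟪v t, b t⟫) • v t + (3 * γ t ^ 6 * ⟪v t, a t⟫^2) • v t
            + (3 * γ t ^ 4 * ⟪v t, a t⟫) • a t + (γ t ^ 2) • b t)) :
    (∀ t, HasDerivAt
        (fun s => Es (v s) + e * φex (q s) - ε * (e^2 / (6 * π)) * γ s ^ 4 * ⟪v s, a s⟫)
        (-(ε * (e^2 / (6 * π)) * (γ t ^ 4 * ‖a t‖^2 + γ t ^ 6 * ⟪v t, a t⟫^2))) t)
    ∧ Antitone (fun s => Es (v s) + e * φex (q s)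
        - ε * (e^2 / (6 * π)) * γ s ^ 4 * ⟪v s, a s⟫) := by
  have hγ' : ∀ t, γ t = lorentzFactor (v t) := hγ
  refine (and_iff_left_of_imp fun hG => ?_).mpr fun t => ?_
  · exact antitone_of_hasDerivAt_nonpos hG fun t => neg_nonpos.mpr (by positivity)
  have hpower : ⟪v t, M (v t) (a t)⟫ = e * ⟪v t, Eex (q t)⟫
      + ε * (e ^ 2 / (6 * π)) * ⟪v t, radiationReaction (γ t) (v t) (a t) (b t)⟫ := by
    rw [hODE t, inner_add_right, inner_smul_right, inner_smul_right, inner_add_right,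
      inner_cross3_self, add_zero]
    rfl
  have hsum := ((hM t).fun_add (((hEex (q t)).comp_hasDerivAt (hq t)).const_mul e)).fun_sub
    ((hasDerivAt_schottEnergy (hv t) (ha t) (hv1 t)).const_mul (ε * (e ^ 2 / (6 * π))))
  refine (hsum.congr_deriv ?_).congr_of_eventuallyEq
    (.of_forall fun s => by simp only [hγ']; ring)
  rw [hpower, inner_radiationReaction (hγ' t ▸ lorentzFactor_sq_mul_one_sub_norm_sq (hv1 t)),
    inner_neg_left, real_inner_comm, hγ']
  ring
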